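/- arXiv:2401.15655 — 2 statements merged into one kernel-verified Lean document; each statement's English description precedes it below -/
import Mathlib

section
/- Let Γ be a Jordan group containing a nontrivial finite subgroup. Then the group (Γ × Γ) ⋊ ℤ/2ℤ, where the nontrivial element of ℤ/2ℤ swaps the factors, is Jordan with Jordan constant equal to 2·J(Γ)². -/
/-- The factor-swapping automorphism of G × G. -/
def swapAut (G : Type*) [Group G] : MulAut (G × G) :=
  (MulEquiv.prodComm : (G × G) ≃* (G × G))

theorem swapAut_sq (G : Type*) [Group G] : swapAut G ^ 2 = 1 := by
  ext x <;> simp [swapAut, pow_succ]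

/-- The action of ℤ/2ℤ on G × G where the nontrivial element swaps the factors. -/
def swapAction (G : Type*) [Group G] : Multiplicative (ZMod 2) →* MulAut (G × G) :=
  MonoidHom.mk' (fun z => swapAut G ^ (Multiplicative.toAdd z).val)
    (fun z w => by
      simp only [toAdd_mul, ZMod.val_add]
      rw [← pow_eq_pow_mod _ (swapAut_sq G), pow_add])

/-- The Jordan constant of a finite group: the least index of a normal abelian
subgroup. -/
noncomputable def jordanConstantFin (G : Type*) [Group G] : ℕ :=
  sInf {k | ∃ A : Subgroup G, A.Normal ∧ IsMulCommutative A ∧ A.index = k}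

/-- The set of Jordan constants of finite subgroups of Γ. -/
def jordanSet (Γ : Type*) [Group Γ] : Set ℕ :=
  {m | ∃ K : Subgroup Γ, (K : Set Γ).Finite ∧ jordanConstantFin ↥K = m}

/-- A group is Jordan if the Jordan constants of its finite subgroups are bounded. -/
def IsJordanGroup (Γ : Type*) [Group Γ] : Prop := BddAbove (jordanSet Γ)

/-- The Jordan constant of a Jordan group. -/
noncomputable def jordanConstant (Γ : Type*) [Group Γ] : ℕ := sSup (jordanSet Γ)


/-!
Let `H` be a finite subgroup of `(Γ × Γ) ⋊ C₂`, `H₀ = H ∩ (Γ × Γ)` and `P₁, P₂` the two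
coordinate projections of `H₀`. If `H ≤ Γ × Γ`, choose normal abelian `Aᵢ ⊴ Pᵢ` of index at most
`J(Γ)`. If `H` contains a swapping element `t = ((a, b), σ)`, conjugation by `t` carries `P₁` into
`b⁻¹ P₂ b`, so `A₁ = b⁻¹ A₂ b` works for a normal abelian `A₂ ⊴ P₂`. Either way `A₁ × A₂` is
abelian and normalised by `H`, with index at most `J(Γ)²` in `H₀`, and `[H : H₀] ≤ 2`.

Conversely, let `K ≤ Γ` be finite and nontrivial with `J(K) = J(Γ)`, and `B` normal abelian in
`K ≀ C₂`. If `B ≤ K × K`, then `B ≤ Q × Q` for the normal abelian subgroup `Q ⊴ K` projected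
from `B`, so `[K ≀ C₂ : B] ≥ 2 [K : Q]²`. Otherwise `B` contains a swapping element `s`; the
commutators `[(g, 1), s] ∈ B` have first coordinate `g`, so `K` is abelian, while `B` is proper,
of index `≥ 2`.
-/

section JordanConstantFin

variable {G : Type*} [Group G]

lemma jordanConstantFin_le_index {A : Subgroup G} (hA : A.Normal) [IsMulCommutative A] :
    jordanConstantFin G ≤ A.index :=
  Nat.sInf_le ⟨A, hA, inferInstance, rfl⟩

lemma exists_index_eq_jordanConstantFin :
    ∃ A : Subgroup G, A.Normal ∧ IsMulCommutative A ∧ A.index = jordanConstantFin G :=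
  Nat.sInf_mem (s := {k | ∃ A : Subgroup G, A.Normal ∧ IsMulCommutative A ∧ A.index = k})
    ⟨_, ⊥, inferInstance, inferInstance, rfl⟩

lemma le_jordanConstantFin {n : ℕ}
    (h : ∀ A : Subgroup G, A.Normal → IsMulCommutative A → n ≤ A.index) :
    n ≤ jordanConstantFin G := by
  obtain ⟨A, hA, hAc, hAi⟩ := exists_index_eq_jordanConstantFin (G := G)
  exact hAi ▸ h A hA hAc

lemma jordanConstantFin_pos [Finite G] : 0 < jordanConstantFin G := by
  obtain ⟨A, -, -, hA⟩ := exists_index_eq_jordanConstantFin (G := G)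
  exact hA ▸ Nat.pos_of_ne_zero A.index_ne_zero_of_finite

lemma jordanConstantFin_le_one [IsMulCommutative G] : jordanConstantFin G ≤ 1 :=
  Subgroup.index_top (G := G) ▸ jordanConstantFin_le_index (Subgroup.normal_of_isMulCommutative ⊤)

lemma jordanConstantFin_le_of_mulEquiv {G' : Type*} [Group G'] (e : G ≃* G') :
    jordanConstantFin G' ≤ jordanConstantFin G := by
  obtain ⟨A, hA, hAc, hAi⟩ := exists_index_eq_jordanConstantFin (G := G)
  rw [← hAi, ← A.index_map_equiv e]
  exact jordanConstantFin_le_index (hA.map e.toMonoidHom e.surjective)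

lemma jordanConstantFin_congr {G' : Type*} [Group G'] (e : G ≃* G') :
    jordanConstantFin G = jordanConstantFin G' :=
  le_antisymm (jordanConstantFin_le_of_mulEquiv e.symm) (jordanConstantFin_le_of_mulEquiv e)

lemma jordanConstantFin_le_relIndex (D H : Subgroup G) [IsMulCommutative D]
    (hD : ∀ h ∈ H, ∀ d ∈ D, h * d * h⁻¹ ∈ D) :
    jordanConstantFin H ≤ D.relIndex H :=
  have : (D.subgroupOf H).Normal := ⟨fun d hd h => hD h h.2 d hd⟩
  jordanConstantFin_le_index this

lemma exists_relIndex_eq_jordanConstantFin (P : Subgroup G) :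
    ∃ A : Subgroup G, IsMulCommutative A ∧ (∀ p ∈ P, ∀ a ∈ A, p * a * p⁻¹ ∈ A) ∧
      A.relIndex P = jordanConstantFin P := by
  obtain ⟨B, hB, hBc, hBi⟩ := exists_index_eq_jordanConstantFin (G := P)
  refine ⟨B.map P.subtype, inferInstance, ?_, ?_⟩
  · rintro p hp _ ⟨b, hb, rfl⟩
    exact ⟨⟨p, hp⟩ * b * ⟨p, hp⟩⁻¹, hB.conj_mem b hb _, rfl⟩
  · rw [Subgroup.relIndex, Subgroup.subgroupOf,
      Subgroup.comap_map_eq_self_of_injective P.subtype_injective, hBi]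

end JordanConstantFin

section JordanGroup

variable {Γ : Type*} [Group Γ]

lemma jordanConstantFin_le_jordanConstant (hJ : IsJordanGroup Γ) {K : Subgroup Γ}
    (hK : (K : Set Γ).Finite) : jordanConstantFin K ≤ jordanConstant Γ :=
  le_csSup hJ ⟨K, hK, rfl⟩

lemma jordanConstantFin_mem_jordanSet {G : Type*} [Group G] [Finite G] {f : G →* Γ}
    (hf : Function.Injective f) : jordanConstantFin G ∈ jordanSet Γ :=
  ⟨f.range, f.coe_range ▸ Set.finite_range f,
    (jordanConstantFin_congr (MonoidHom.ofInjective hf)).symm⟩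

lemma exists_ne_bot_jordanConstantFin_eq (hJ : IsJordanGroup Γ)
    (hfin : ∃ K : Subgroup Γ, (K : Set Γ).Finite ∧ K ≠ ⊥) :
    ∃ K : Subgroup Γ, (K : Set Γ).Finite ∧ K ≠ ⊥ ∧ jordanConstantFin K = jordanConstant Γ := by
  obtain ⟨K₀, hK₀, hK₀ne⟩ := hfin
  obtain ⟨K, hK, hKJ⟩ : jordanConstant Γ ∈ jordanSet Γ := Nat.sSup_mem ⟨_, K₀, hK₀, rfl⟩ hJ
  by_cases hKbot : K = ⊥
  · refine ⟨K₀, hK₀, hK₀ne, le_antisymm (jordanConstantFin_le_jordanConstant hJ hK₀) ?_⟩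
    have := hK₀.to_subtype
    rw [← hKJ, hKbot]
    exact jordanConstantFin_le_one.trans jordanConstantFin_pos
  · exact ⟨K, hK, hKbot, hKJ⟩

end JordanGroup

namespace Subgroup

variable {G₁ G₂ : Type*} [Group G₁] [Group G₂]

instance prod_isMulCommutative (A₁ : Subgroup G₁) (A₂ : Subgroup G₂) [IsMulCommutative A₁]
    [IsMulCommutative A₂] : IsMulCommutative (A₁.prod A₂) :=
  IsMulCommutative.of_setLike_mul_comm fun _ ha _ hb =>
    Prod.ext (setLike_mul_comm ha.1 hb.1) (setLike_mul_comm ha.2 hb.2)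

lemma relIndex_prod_le (A₁ : Subgroup G₁) (A₂ : Subgroup G₂) (Q : Subgroup (G₁ × G₂)) :
    (A₁.prod A₂).relIndex Q ≤
      A₁.relIndex (Q.map (MonoidHom.fst G₁ G₂)) * A₂.relIndex (Q.map (MonoidHom.snd G₁ G₂)) := by
  have : A₁.prod A₂ = A₁.comap (MonoidHom.fst G₁ G₂) ⊓ A₂.comap (MonoidHom.snd G₁ G₂) := rfl
  rw [this, ← relIndex_comap, ← relIndex_comap]
  exact relIndex_inf_le

end Subgroup

namespace SemidirectProduct

variable {N G : Type*} [Group N] [Group G] {φ : G →* MulAut N}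

instance [Finite N] [Finite G] : Finite (N ⋊[φ] G) := Finite.of_equiv _ equivProd.symm

lemma conj_inl (g : N ⋊[φ] G) (n : N) :
    g * inl n * g⁻¹ = inl (g.left * φ g.right n * g.left⁻¹) := by
  ext <;> simp [mul_assoc]

/-- By `conj_inl`, this says that `H` normalizes `D.map inl`. -/
def Normalizes (H : Subgroup (N ⋊[φ] G)) (D : Subgroup N) : Prop :=
  ∀ h ∈ H, ∀ n ∈ D, h.left * φ h.right n * h.left⁻¹ ∈ D

lemma relIndex_map_inl (D : Subgroup N) (H : Subgroup (N ⋊[φ] G)) :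
    (D.map inl).relIndex H = D.relIndex (H.comap inl) * (inl : N →* N ⋊[φ] G).range.relIndex H := by
  rw [← Subgroup.relIndex_map_map_of_injective D _ (inl_injective (φ := φ)), Subgroup.map_comap_eq,
    Subgroup.relIndex_inf_mul_relIndex, inf_of_le_left (Subgroup.map_le_range _ _)]

lemma relIndex_range_inl_le [Finite G] (H : Subgroup (N ⋊[φ] G)) :
    (inl : N →* N ⋊[φ] G).range.relIndex H ≤ Nat.card G := by
  rw [range_inl_eq_ker_rightHom, Subgroup.relIndex_ker]
  exact Subgroup.card_le_card_group _

lemma index_eq_index_comap_inl_mul_card {B : Subgroup (N ⋊[φ] G)} (hB : B ≤ inl.range) :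
    B.index = (B.comap inl).index * Nat.card G := by
  rw [← Subgroup.relIndex_mul_index hB, ← Subgroup.relIndex_top_right (B.comap inl),
    Subgroup.relIndex_comap, ← MonoidHom.range_eq_map, range_inl_eq_ker_rightHom,
    Subgroup.index_ker, MonoidHom.range_eq_top.2 rightHom_surjective, Subgroup.card_top]

lemma jordanConstantFin_le_relIndex_mul_card [Finite G] {H : Subgroup (N ⋊[φ] G)}
    {D : Subgroup N} [IsMulCommutative D] (hD : Normalizes H D) :
    jordanConstantFin H ≤ D.relIndex (H.comap inl) * Nat.card G :=
  calc jordanConstantFin H ≤ (D.map inl).relIndex H := by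
        refine jordanConstantFin_le_relIndex _ _ ?_
        rintro h hh _ ⟨n, hn, rfl⟩
        rw [conj_inl]
        exact Subgroup.mem_map_of_mem _ (hD h hh n hn)
    _ ≤ D.relIndex (H.comap inl) * Nat.card G := by
        rw [relIndex_map_inl]
        exact Nat.mul_le_mul_left _ (relIndex_range_inl_le H)

end SemidirectProduct

/-- The wreath product `G ≀ C₂`. -/
abbrev SwapWreath (G : Type*) [Group G] := (G × G) ⋊[swapAction G] Multiplicative (ZMod 2)

lemma swapAction_apply_of_ne_one {G : Type*} [Group G] {z : Multiplicative (ZMod 2)} (hz : z ≠ 1)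
    (n : G × G) : swapAction G z n = n.swap := by
  obtain rfl : z = Multiplicative.ofAdd 1 := by revert z; decide
  rfl

namespace SwapWreath

open SemidirectProduct

section Map

variable {G G' : Type*} [Group G] [Group G']

def map (f : G →* G') : SwapWreath G →* SwapWreath G' :=
  SemidirectProduct.map (f.prodMap f) (MonoidHom.id _) fun z => by
    ext n <;> rcases eq_or_ne z 1 with rfl | hz <;> simp [swapAction_apply_of_ne_one, *]

lemma map_injective {f : G →* G'} (hf : Function.Injective f) : Function.Injective (map f) :=
  fun _ _ h => SemidirectProduct.ext (hf.prodMap hf (congrArg SemidirectProduct.left h))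
    (congrArg SemidirectProduct.right h :)

end Map

section UpperBound

variable {Γ : Type*} [Group Γ] {H : Subgroup (SwapWreath Γ)}

def leftFactor (H : Subgroup (SwapWreath Γ)) : Subgroup Γ := (H.comap inl).map (MonoidHom.fst Γ Γ)

def rightFactor (H : Subgroup (SwapWreath Γ)) : Subgroup Γ := (H.comap inl).map (MonoidHom.snd Γ Γ)

lemma left_mem_comap_inl {h : SwapWreath Γ} (hh : h ∈ H) (h1 : h.right = 1) :
    h.left ∈ H.comap inl := by
  have : inl h.left = h := by ext <;> simp [h1]
  rwa [Subgroup.mem_comap, this]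

lemma left_fst_mem_leftFactor {h : SwapWreath Γ} (hh : h ∈ H) (h1 : h.right = 1) :
    h.left.1 ∈ leftFactor H :=
  Subgroup.mem_map_of_mem _ (left_mem_comap_inl hh h1)

lemma left_snd_mem_rightFactor {h : SwapWreath Γ} (hh : h ∈ H) (h1 : h.right = 1) :
    h.left.2 ∈ rightFactor H :=
  Subgroup.mem_map_of_mem _ (left_mem_comap_inl hh h1)

lemma left_snd_mul_left_fst_mem_rightFactor {g g' : SwapWreath Γ} (hg : g ∈ H) (hg' : g' ∈ H)
    (hg1 : g.right ≠ 1) (hg1' : g'.right ≠ 1) : g.left.2 * g'.left.1 ∈ rightFactor H := by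
  have hright : (g * g').right = 1 :=
    (by decide : ∀ z z' : Multiplicative (ZMod 2), z ≠ 1 → z' ≠ 1 → z * z' = 1) _ _ hg1 hg1'
  have := left_snd_mem_rightFactor (H.mul_mem hg hg') hright
  rwa [mul_left, swapAction_apply_of_ne_one hg1] at this

lemma conj_mem_rightFactor {t : SwapWreath Γ} (ht : t ∈ H) (ht1 : t.right ≠ 1) {x : Γ}
    (hx : x ∈ leftFactor H) : t.left.2 * x * t.left.2⁻¹ ∈ rightFactor H := by
  obtain ⟨p, hp, rfl⟩ := hx
  have := left_snd_mem_rightFactor (H.mul_mem (H.mul_mem ht hp) (H.inv_mem ht)) (by simp)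
  rwa [conj_inl, left_inl, swapAction_apply_of_ne_one ht1] at this

lemma exists_normalizes_of_forall_right_eq_one (hH : ∀ h ∈ H, h.right = 1) {A₂ : Subgroup Γ}
    (hA₂ : ∀ p ∈ rightFactor H, ∀ x ∈ A₂, p * x * p⁻¹ ∈ A₂) :
    ∃ A₁ : Subgroup Γ, IsMulCommutative A₁ ∧
      A₁.relIndex (leftFactor H) = jordanConstantFin (leftFactor H) ∧
        Normalizes H (A₁.prod A₂) := by
  obtain ⟨A₁, hA₁c, hA₁, hA₁i⟩ := exists_relIndex_eq_jordanConstantFin (leftFactor H)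
  refine ⟨A₁, hA₁c, hA₁i, fun h hh n hn => ?_⟩
  rw [hH h hh, map_one, MulAut.one_apply]
  exact ⟨hA₁ _ (left_fst_mem_leftFactor hh (hH h hh)) _ hn.1,
    hA₂ _ (left_snd_mem_rightFactor hh (hH h hh)) _ hn.2⟩

lemma exists_normalizes_of_right_ne_one {t : SwapWreath Γ} (ht : t ∈ H) (ht1 : t.right ≠ 1)
    {A₂ : Subgroup Γ} [IsMulCommutative A₂] (hA₂ : ∀ p ∈ rightFactor H, ∀ x ∈ A₂, p * x * p⁻¹ ∈ A₂)
    (hA₂i : A₂.relIndex (rightFactor H) ≠ 0) :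
    ∃ A₁ : Subgroup Γ, IsMulCommutative A₁ ∧
      A₁.relIndex (leftFactor H) ≤ A₂.relIndex (rightFactor H) ∧ Normalizes H (A₁.prod A₂) := by
  have hmem : ∀ x, x ∈ A₂.comap (MulAut.conj t.left.2).toMonoidHom ↔
      t.left.2 * x * t.left.2⁻¹ ∈ A₂ := fun _ => Iff.rfl
  refine ⟨A₂.comap (MulAut.conj t.left.2).toMonoidHom,
    A₂.comap_injective_isMulCommutative (MulAut.conj t.left.2).injective, ?_, ?_⟩
  · rw [Subgroup.relIndex_comap]
    exact Subgroup.relIndex_le_of_le_right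
      (Subgroup.map_le_iff_le_comap.2 fun _ => conj_mem_rightFactor ht ht1) hA₂i
  rintro h hh n ⟨hn₁, hn₂⟩
  rw [Subgroup.mem_prod, hmem]
  rcases eq_or_ne h.right 1 with h1 | h1
  · rw [h1, map_one, MulAut.one_apply]
    simp only [Prod.fst_mul, Prod.snd_mul, Prod.fst_inv, Prod.snd_inv]
    refine ⟨?_, hA₂ _ (left_snd_mem_rightFactor hh h1) _ hn₂⟩
    convert hA₂ _ (conj_mem_rightFactor ht ht1 (left_fst_mem_leftFactor hh h1)) _
      ((hmem _).1 hn₁) using 1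
    group
  · rw [swapAction_apply_of_ne_one h1]
    simp only [Prod.fst_mul, Prod.snd_mul, Prod.fst_inv, Prod.snd_inv, Prod.fst_swap,
      Prod.snd_swap]
    constructor
    · convert hA₂ _ (left_snd_mul_left_fst_mem_rightFactor ht hh ht1 h1) _ hn₂ using 1
      group
    · have hd := left_snd_mul_left_fst_mem_rightFactor hh ht h1 ht1
      have hb := left_snd_mul_left_fst_mem_rightFactor ht ht ht1 ht1
      convert hA₂ _ (mul_mem hd (inv_mem hb)) _ ((hmem _).1 hn₁) using 1
      group

lemma jordanConstantFin_le_two_mul_sq (hJ : IsJordanGroup Γ)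
    (hH : (H : Set (SwapWreath Γ)).Finite) : jordanConstantFin H ≤ 2 * jordanConstant Γ ^ 2 := by
  have hH₀ : ((H.comap inl : Subgroup (Γ × Γ)) : Set (Γ × Γ)).Finite := by
    rw [Subgroup.coe_comap]
    exact hH.preimage inl_injective.injOn
  have hP₁ : (leftFactor H : Set Γ).Finite := hH₀.image _
  have hP₂ : (rightFactor H : Set Γ).Finite := hH₀.image _
  obtain ⟨A₂, hA₂c, hA₂, hA₂i⟩ := exists_relIndex_eq_jordanConstantFin (rightFactor H)
  have hA₂J : A₂.relIndex (rightFactor H) ≤ jordanConstant Γ :=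
    hA₂i ▸ jordanConstantFin_le_jordanConstant hJ hP₂
  obtain ⟨A₁, hA₁c, hA₁J, hD⟩ : ∃ A₁ : Subgroup Γ, IsMulCommutative A₁ ∧
      A₁.relIndex (leftFactor H) ≤ jordanConstant Γ ∧ Normalizes H (A₁.prod A₂) := by
    by_cases hswap : ∃ t ∈ H, t.right ≠ 1
    · obtain ⟨t, ht, ht1⟩ := hswap
      have := hP₂.to_subtype
      obtain ⟨A₁, hA₁c, hA₁i, hD⟩ :=
        exists_normalizes_of_right_ne_one ht ht1 hA₂ (hA₂i ▸ jordanConstantFin_pos.ne')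
      exact ⟨A₁, hA₁c, hA₁i.trans hA₂J, hD⟩
    · push Not at hswap
      obtain ⟨A₁, hA₁c, hA₁i, hD⟩ := exists_normalizes_of_forall_right_eq_one hswap hA₂
      exact ⟨A₁, hA₁c, hA₁i ▸ jordanConstantFin_le_jordanConstant hJ hP₁, hD⟩
  calc jordanConstantFin H
      ≤ (A₁.prod A₂).relIndex (H.comap inl) * Nat.card (Multiplicative (ZMod 2)) :=
        jordanConstantFin_le_relIndex_mul_card hD
    _ ≤ jordanConstant Γ * jordanConstant Γ * 2 := by
        refine Nat.mul_le_mul ?_ (by simp)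
        exact (Subgroup.relIndex_prod_le A₁ A₂ _).trans (Nat.mul_le_mul hA₁J hA₂J)
    _ = 2 * jordanConstant Γ ^ 2 := by ring

end UpperBound

section LowerBound

variable {G : Type*} [Group G] [Finite G] {B : Subgroup (SwapWreath G)}

lemma two_mul_sq_le_index_of_le_range_inl (hB : B.Normal) [IsMulCommutative B]
    (hBle : B ≤ inl.range) : 2 * jordanConstantFin G ^ 2 ≤ B.index := by
  set Q := (B.comap inl).map (MonoidHom.fst G G)
  have hQ : Q.Normal := ⟨by
    rintro _ ⟨p, hp, rfl⟩ g
    refine ⟨(g, 1) * p * (g, 1)⁻¹, ?_, by simp⟩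
    have := hB.conj_mem _ hp (inl (g, 1))
    rwa [← map_inv, ← map_mul, ← map_mul] at this⟩
  have : IsMulCommutative (B.comap inl) := B.comap_injective_isMulCommutative inl_injective
  have hBQ : B.comap inl ≤ Q.prod Q := fun p hp => by
    refine ⟨Subgroup.mem_map_of_mem _ hp, p.swap, ?_, rfl⟩
    have := hB.conj_mem _ hp (inr (Multiplicative.ofAdd 1))
    rwa [conj_inl, left_inr, right_inr, swapAction_apply_of_ne_one (by decide), one_mul,
      inv_one, mul_one] at this
  calc 2 * jordanConstantFin G ^ 2 ≤ Q.index * Q.index * 2 := by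
        have := jordanConstantFin_le_index hQ
        nlinarith
    _ ≤ (B.comap inl).index * Nat.card (Multiplicative (ZMod 2)) := by
        rw [← Subgroup.index_prod]
        exact Nat.mul_le_mul (Subgroup.index_antitone hBQ) (by simp)
    _ = B.index := (index_eq_index_comap_inl_mul_card hBle).symm

lemma two_mul_sq_le_index_of_not_le_range_inl [Nontrivial G] (hB : B.Normal)
    [IsMulCommutative B] (hBle : ¬ B ≤ inl.range) : 2 * jordanConstantFin G ^ 2 ≤ B.index := by
  obtain ⟨s, hs, hs1⟩ : ∃ s ∈ B, s.right ≠ 1 := by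
    simpa [SetLike.le_def, range_inl_eq_ker_rightHom] using hBle
  have hfst : ∀ g : G, ∃ n : G × G, n.1 = g ∧ inl n ∈ B := fun g => by
    refine ⟨(g, 1) * (s.left * ((g, 1)⁻¹ : G × G).swap * s.left⁻¹), by simp, ?_⟩
    have := B.mul_mem (hB.conj_mem _ hs (inl (g, 1))) (B.inv_mem hs)
    rwa [mul_assoc (inl (g, 1)) s, mul_assoc (inl (g, 1)), ← map_inv, conj_inl,
      swapAction_apply_of_ne_one hs1, ← map_mul] at this
  have : IsMulCommutative G := ⟨⟨fun g g' => by
    obtain ⟨n, rfl, hn⟩ := hfst g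
    obtain ⟨n', rfl, hn'⟩ := hfst g'
    have := setLike_mul_comm hn hn'
    rw [← map_mul, ← map_mul] at this
    exact congrArg Prod.fst (inl_injective this)⟩⟩
  have hBtop : B ≠ ⊤ := by
    rintro rfl
    obtain ⟨g, hg⟩ := exists_ne (1 : G)
    have := setLike_mul_comm (Subgroup.mem_top (inr (Multiplicative.ofAdd 1) : SwapWreath G))
      (Subgroup.mem_top (inl (g, 1)))
    rw [← mul_inv_eq_iff_eq_mul, conj_inl, right_inr,
      swapAction_apply_of_ne_one (by decide : Multiplicative.ofAdd (1 : ZMod 2) ≠ 1)] at this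
    exact hg (by simpa [eq_comm] using this)
  calc 2 * jordanConstantFin G ^ 2 ≤ 2 * 1 ^ 2 := by
        gcongr
        exact jordanConstantFin_le_one
    _ ≤ B.index := Subgroup.one_lt_index_of_ne_top hBtop

lemma two_mul_sq_le_jordanConstantFin [Nontrivial G] :
    2 * jordanConstantFin G ^ 2 ≤ jordanConstantFin (SwapWreath G) :=
  le_jordanConstantFin fun B hB _ => by
    by_cases hBle : B ≤ inl.range
    · exact two_mul_sq_le_index_of_le_range_inl hB hBle
    · exact two_mul_sq_le_index_of_not_le_range_inl hB hBle

end LowerBound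

end SwapWreath

open SwapWreath in
/-- If Γ is a Jordan group containing a nontrivial finite subgroup, then
(Γ × Γ) ⋊ ℤ/2ℤ (with ℤ/2ℤ swapping the factors) is Jordan with Jordan constant
2 · J(Γ)². -/
theorem jordanConstant_wreath_of_jordan (Γ : Type*) [Group Γ] (hJ : IsJordanGroup Γ)
    (hfin : ∃ K : Subgroup Γ, (K : Set Γ).Finite ∧ K ≠ ⊥) :
    IsJordanGroup ((Γ × Γ) ⋊[swapAction Γ] Multiplicative (ZMod 2)) ∧
      jordanConstant ((Γ × Γ) ⋊[swapAction Γ] Multiplicative (ZMod 2)) =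
        2 * (jordanConstant Γ) ^ 2 := by
  obtain ⟨K, hK, hKbot, hKJ⟩ := exists_ne_bot_jordanConstantFin_eq hJ hfin
  have := hK.to_subtype
  have := (Subgroup.nontrivial_iff_ne_bot K).2 hKbot
  have hub : 2 * jordanConstant Γ ^ 2 ∈ upperBounds (jordanSet (SwapWreath Γ)) := by
    rintro _ ⟨H, hH, rfl⟩
    exact jordanConstantFin_le_two_mul_sq hJ hH
  have hK₂ : jordanConstantFin (SwapWreath K) ∈ jordanSet (SwapWreath Γ) :=
    jordanConstantFin_mem_jordanSet (map_injective K.subtype_injective)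
  have hK₂J : jordanConstantFin (SwapWreath K) = 2 * jordanConstant Γ ^ 2 :=
    le_antisymm (hub hK₂) (hKJ ▸ two_mul_sq_le_jordanConstantFin)
  have hmax : IsGreatest (jordanSet (SwapWreath Γ)) (2 * jordanConstant Γ ^ 2) := ⟨hK₂J ▸ hK₂, hub⟩
  exact ⟨hmax.bddAbove, hmax.csSup_eq⟩
end

section
/- Let K be a field of characteristic 0 containing an element r that is not a square, such that √5 ∈ K(√r) and −1 = (a + b√r)² + (c + d√r)² for some a, b, c, d ∈ K. Then the subgroup of PGL₂(K(√r)) generated by the matrices A = [[0,1],[−1,0]] and C = [[2c + 2d√r + √5 − 3, 2a + 2b√r − √5 + 1],[2a + 2b√r + √5 − 1, −2c − 2d√r + √5 − 3]] is isomorphic to the alternating group A₅, with A corresponding to (1 2)(3 4) and C to (1 2 3 4 5). -/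
/-- The projective general linear group PGL₂(L). -/
abbrev PGL2 (L : Type*) [Field L] :=
  GL (Fin 2) L ⧸ Subgroup.center (GL (Fin 2) L)


/-! Auxiliary material for `closure_iso_A5`. -/

section words
variable {Γ : Type*} [Group Γ] (x y : Γ)

def cw : Fin 12 → Γ := fun j => match j with
  | ⟨0,_⟩ => 1
  | ⟨1,_⟩ => y
  | ⟨2,_⟩ => y*(x)
  | ⟨3,_⟩ => y*(x*(x))
  | ⟨4,_⟩ => y*(x*(y))
  | ⟨5,_⟩ => y*(x*(x*(x)))
  | ⟨6,_⟩ => y*(x*(x*(y)))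
  | ⟨7,_⟩ => y*(x*(x*(x*(y))))
  | ⟨8,_⟩ => y*(x*(x*(x*(y*(x)))))
  | ⟨9,_⟩ => y*(x*(x*(x*(y*(x*(x))))))
  | ⟨10,_⟩ => y*(x*(x*(x*(y*(x*(y))))))
  | ⟨11,_⟩ => y*(x*(x*(x*(y*(x*(x*(y)))))))

variable (rx : x*(x*(x*(x*x))) = (1:Γ)) (ry : y*y = (1:Γ)) (rxy : x*(y*(x*(y*(x*y)))) = (1:Γ))

include rx ry rxy in
set_option maxHeartbeats 1000000 in
theorem cw_table_x : ∀ (j : Fin 12), ∃ (a : ℕ) (m : Fin 12), cw x y j * x = x ^ a * cw x y m := by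
  intro j; fin_cases j
  · refine ⟨1, 0, ?_⟩
    show (1) * x = x ^ (1:ℕ) * (1)
    group
  · refine ⟨0, 2, ?_⟩
    show (y) * x = x ^ (0:ℕ) * (y*(x))
    group
  · refine ⟨0, 3, ?_⟩
    show (y*(x)) * x = x ^ (0:ℕ) * (y*(x*(x)))
    group
  · refine ⟨0, 5, ?_⟩
    show (y*(x*(x))) * x = x ^ (0:ℕ) * (y*(x*(x*(x))))
    group
  · refine ⟨4, 1, ?_⟩
    show (y*(x*(y))) * x = x ^ (4:ℕ) * (y)
    calc (y*(x*(y))) * x = (1) * (1) * (y*(x*(y*(x)))) := by simp only [mul_assoc, one_mul, mul_one]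
      _ = (1) * (x*(x*(x*(x*(x))))) * (y*(x*(y*(x)))) := by rw [rx]
      _ = (x*(x*(x*(x*(x*(y*(x*(y*(x))))))))) * (1) * (1) := by simp only [mul_assoc, one_mul, mul_one]
      _ = (x*(x*(x*(x*(x*(y*(x*(y*(x))))))))) * (y*(y)) * (1) := by rw [ry]
      _ = (x*(x*(x*(x)))) * (x*(y*(x*(y*(x*(y)))))) * (y) := by simp only [mul_assoc, one_mul, mul_one]
      _ = (x*(x*(x*(x)))) * (1) * (y) := by rw [rxy]
      _ = x ^ (4:ℕ) * (y) := by simp only [pow_succ, pow_zero, one_mul, mul_one, mul_assoc]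
  · refine ⟨1, 4, ?_⟩
    show (y*(x*(x*(x)))) * x = x ^ (1:ℕ) * (y*(x*(y)))
    calc (y*(x*(x*(x)))) * x = (1) * (1) * (y*(x*(x*(x*(x))))) := by simp only [mul_assoc, one_mul, mul_one]
      _ = (1) * (x*(y*(x*(y*(x*(y)))))) * (y*(x*(x*(x*(x))))) := by rw [rxy]
      _ = (x*(y*(x*(y*(x))))) * (y*(y)) * (x*(x*(x*(x)))) := by simp only [mul_assoc, one_mul, mul_one]
      _ = (x*(y*(x*(y*(x))))) * (1) * (x*(x*(x*(x)))) := by rw [ry]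
      _ = (x*(y*(x*(y)))) * (x*(x*(x*(x*(x))))) * (1) := by simp only [mul_assoc, one_mul, mul_one]
      _ = (x*(y*(x*(y)))) * (1) * (1) := by rw [rx]
      _ = x ^ (1:ℕ) * (y*(x*(y))) := by simp only [pow_succ, pow_zero, one_mul, mul_one, mul_assoc]
  · refine ⟨4, 7, ?_⟩
    show (y*(x*(x*(y)))) * x = x ^ (4:ℕ) * (y*(x*(x*(x*(y)))))
    calc (y*(x*(x*(y)))) * x = (1) * (1) * (y*(x*(x*(y*(x))))) := by simp only [mul_assoc, one_mul, mul_one]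
      _ = (1) * (x*(x*(x*(x*(x))))) * (y*(x*(x*(y*(x))))) := by rw [rx]
      _ = (x*(x*(x*(x)))) * (1) * (x*(y*(x*(x*(y*(x)))))) := by simp only [mul_assoc, one_mul, mul_one]
      _ = (x*(x*(x*(x)))) * (y*(y)) * (x*(y*(x*(x*(y*(x)))))) := by rw [ry]
      _ = (x*(x*(x*(x*(y))))) * (1) * (y*(x*(y*(x*(x*(y*(x))))))) := by simp only [mul_assoc, one_mul, mul_one]
      _ = (x*(x*(x*(x*(y))))) * (x*(x*(x*(x*(x))))) * (y*(x*(y*(x*(x*(y*(x))))))) := by rw [rx]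
      _ = (x*(x*(x*(x*(y*(x*(x*(x*(x*(x*(y*(x*(y*(x)))))))))))))) * (1) * (x*(y*(x))) := by simp only [mul_assoc, one_mul, mul_one]
      _ = (x*(x*(x*(x*(y*(x*(x*(x*(x*(x*(y*(x*(y*(x)))))))))))))) * (y*(y)) * (x*(y*(x))) := by rw [ry]
      _ = (x*(x*(x*(x*(y*(x*(x*(x*(x))))))))) * (x*(y*(x*(y*(x*(y)))))) * (y*(x*(y*(x)))) := by simp only [mul_assoc, one_mul, mul_one]
      _ = (x*(x*(x*(x*(y*(x*(x*(x*(x))))))))) * (1) * (y*(x*(y*(x)))) := by rw [rxy]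
      _ = (x*(x*(x*(x*(y*(x*(x*(x*(x*(y*(x*(y*(x))))))))))))) * (1) * (1) := by simp only [mul_assoc, one_mul, mul_one]
      _ = (x*(x*(x*(x*(y*(x*(x*(x*(x*(y*(x*(y*(x))))))))))))) * (y*(y)) * (1) := by rw [ry]
      _ = (x*(x*(x*(x*(y*(x*(x*(x)))))))) * (x*(y*(x*(y*(x*(y)))))) * (y) := by simp only [mul_assoc, one_mul, mul_one]
      _ = (x*(x*(x*(x*(y*(x*(x*(x)))))))) * (1) * (y) := by rw [rxy]
      _ = x ^ (4:ℕ) * (y*(x*(x*(x*(y))))) := by simp only [pow_succ, pow_zero, one_mul, mul_one, mul_assoc]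
  · refine ⟨0, 8, ?_⟩
    show (y*(x*(x*(x*(y))))) * x = x ^ (0:ℕ) * (y*(x*(x*(x*(y*(x))))))
    group
  · refine ⟨0, 9, ?_⟩
    show (y*(x*(x*(x*(y*(x)))))) * x = x ^ (0:ℕ) * (y*(x*(x*(x*(y*(x*(x)))))))
    group
  · refine ⟨1, 10, ?_⟩
    show (y*(x*(x*(x*(y*(x*(x))))))) * x = x ^ (1:ℕ) * (y*(x*(x*(x*(y*(x*(y)))))))
    calc (y*(x*(x*(x*(y*(x*(x))))))) * x = (1) * (1) * (y*(x*(x*(x*(y*(x*(x*(x)))))))) := by simp only [mul_assoc, one_mul, mul_one]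
      _ = (1) * (x*(y*(x*(y*(x*(y)))))) * (y*(x*(x*(x*(y*(x*(x*(x)))))))) := by rw [rxy]
      _ = (x*(y*(x*(y*(x))))) * (y*(y)) * (x*(x*(x*(y*(x*(x*(x))))))) := by simp only [mul_assoc, one_mul, mul_one]
      _ = (x*(y*(x*(y*(x))))) * (1) * (x*(x*(x*(y*(x*(x*(x))))))) := by rw [ry]
      _ = (x*(y*(x))) * (1) * (y*(x*(x*(x*(x*(y*(x*(x*(x))))))))) := by simp only [mul_assoc, one_mul, mul_one]
      _ = (x*(y*(x))) * (x*(y*(x*(y*(x*(y)))))) * (y*(x*(x*(x*(x*(y*(x*(x*(x))))))))) := by rw [rxy]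
      _ = (x*(y*(x*(x*(y*(x*(y*(x)))))))) * (y*(y)) * (x*(x*(x*(x*(y*(x*(x*(x)))))))) := by simp only [mul_assoc, one_mul, mul_one]
      _ = (x*(y*(x*(x*(y*(x*(y*(x)))))))) * (1) * (x*(x*(x*(x*(y*(x*(x*(x)))))))) := by rw [ry]
      _ = (x*(y*(x*(x*(y*(x*(y))))))) * (x*(x*(x*(x*(x))))) * (y*(x*(x*(x)))) := by simp only [mul_assoc, one_mul, mul_one]
      _ = (x*(y*(x*(x*(y*(x*(y))))))) * (1) * (y*(x*(x*(x)))) := by rw [rx]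
      _ = (x*(y*(x*(x*(y*(x)))))) * (y*(y)) * (x*(x*(x))) := by simp only [mul_assoc, one_mul, mul_one]
      _ = (x*(y*(x*(x*(y*(x)))))) * (1) * (x*(x*(x))) := by rw [ry]
      _ = (x*(y*(x*(x)))) * (1) * (y*(x*(x*(x*(x))))) := by simp only [mul_assoc, one_mul, mul_one]
      _ = (x*(y*(x*(x)))) * (x*(y*(x*(y*(x*(y)))))) * (y*(x*(x*(x*(x))))) := by rw [rxy]
      _ = (x*(y*(x*(x*(x*(y*(x*(y*(x))))))))) * (y*(y)) * (x*(x*(x*(x)))) := by simp only [mul_assoc, one_mul, mul_one]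
      _ = (x*(y*(x*(x*(x*(y*(x*(y*(x))))))))) * (1) * (x*(x*(x*(x)))) := by rw [ry]
      _ = (x*(y*(x*(x*(x*(y*(x*(y)))))))) * (x*(x*(x*(x*(x))))) * (1) := by simp only [mul_assoc, one_mul, mul_one]
      _ = (x*(y*(x*(x*(x*(y*(x*(y)))))))) * (1) * (1) := by rw [rx]
      _ = x ^ (1:ℕ) * (y*(x*(x*(x*(y*(x*(y))))))) := by simp only [pow_succ, pow_zero, one_mul, mul_one, mul_assoc]
  · refine ⟨0, 6, ?_⟩
    show (y*(x*(x*(x*(y*(x*(y))))))) * x = x ^ (0:ℕ) * (y*(x*(x*(y))))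
    calc (y*(x*(x*(x*(y*(x*(y))))))) * x = (y*(x*(x*(x*(y*(x*(y*(x)))))))) * (1) * (1) := by simp only [mul_assoc, one_mul, mul_one]
      _ = (y*(x*(x*(x*(y*(x*(y*(x)))))))) * (y*(y)) * (1) := by rw [ry]
      _ = (y*(x*(x))) * (x*(y*(x*(y*(x*(y)))))) * (y) := by simp only [mul_assoc, one_mul, mul_one]
      _ = (y*(x*(x))) * (1) * (y) := by rw [rxy]
      _ = x ^ (0:ℕ) * (y*(x*(x*(y)))) := by simp only [pow_succ, pow_zero, one_mul, mul_one, mul_assoc]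
  · refine ⟨4, 11, ?_⟩
    show (y*(x*(x*(x*(y*(x*(x*(y)))))))) * x = x ^ (4:ℕ) * (y*(x*(x*(x*(y*(x*(x*(y))))))))
    calc (y*(x*(x*(x*(y*(x*(x*(y)))))))) * x = (1) * (1) * (y*(x*(x*(x*(y*(x*(x*(y*(x))))))))) := by simp only [mul_assoc, one_mul, mul_one]
      _ = (1) * (x*(x*(x*(x*(x))))) * (y*(x*(x*(x*(y*(x*(x*(y*(x))))))))) := by rw [rx]
      _ = (x*(x*(x*(x*(x*(y*(x*(x)))))))) * (1) * (x*(y*(x*(x*(y*(x)))))) := by simp only [mul_assoc, one_mul, mul_one]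
      _ = (x*(x*(x*(x*(x*(y*(x*(x)))))))) * (y*(y)) * (x*(y*(x*(x*(y*(x)))))) := by rw [ry]
      _ = (x*(x*(x*(x*(x*(y*(x*(x*(y))))))))) * (1) * (y*(x*(y*(x*(x*(y*(x))))))) := by simp only [mul_assoc, one_mul, mul_one]
      _ = (x*(x*(x*(x*(x*(y*(x*(x*(y))))))))) * (x*(x*(x*(x*(x))))) * (y*(x*(y*(x*(x*(y*(x))))))) := by rw [rx]
      _ = (x*(x*(x*(x*(x*(y*(x*(x*(y*(x*(x*(x*(x*(x*(y*(x*(y*(x)))))))))))))))))) * (1) * (x*(y*(x))) := by simp only [mul_assoc, one_mul, mul_one]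
      _ = (x*(x*(x*(x*(x*(y*(x*(x*(y*(x*(x*(x*(x*(x*(y*(x*(y*(x)))))))))))))))))) * (y*(y)) * (x*(y*(x))) := by rw [ry]
      _ = (x*(x*(x*(x*(x*(y*(x*(x*(y*(x*(x*(x*(x))))))))))))) * (x*(y*(x*(y*(x*(y)))))) * (y*(x*(y*(x)))) := by simp only [mul_assoc, one_mul, mul_one]
      _ = (x*(x*(x*(x*(x*(y*(x*(x*(y*(x*(x*(x*(x))))))))))))) * (1) * (y*(x*(y*(x)))) := by rw [rxy]
      _ = (x*(x*(x*(x)))) * (1) * (x*(y*(x*(x*(y*(x*(x*(x*(x*(y*(x*(y*(x))))))))))))) := by simp only [mul_assoc, one_mul, mul_one]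
      _ = (x*(x*(x*(x)))) * (y*(y)) * (x*(y*(x*(x*(y*(x*(x*(x*(x*(y*(x*(y*(x))))))))))))) := by rw [ry]
      _ = (x*(x*(x*(x*(y*(y*(x*(y*(x))))))))) * (1) * (x*(y*(x*(x*(x*(x*(y*(x*(y*(x)))))))))) := by simp only [mul_assoc, one_mul, mul_one]
      _ = (x*(x*(x*(x*(y*(y*(x*(y*(x))))))))) * (y*(y)) * (x*(y*(x*(x*(x*(x*(y*(x*(y*(x)))))))))) := by rw [ry]
      _ = (x*(x*(x*(x*(y*(y*(x*(y*(x*(y*(y*(x*(y*(x*(x*(x*(x*(y*(x*(y*(x))))))))))))))))))))) * (1) * (1) := by simp only [mul_assoc, one_mul, mul_one]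
      _ = (x*(x*(x*(x*(y*(y*(x*(y*(x*(y*(y*(x*(y*(x*(x*(x*(x*(y*(x*(y*(x))))))))))))))))))))) * (y*(y)) * (1) := by rw [ry]
      _ = (x*(x*(x*(x*(y*(y*(x*(y*(x*(y*(y*(x*(y*(x*(x*(x)))))))))))))))) * (x*(y*(x*(y*(x*(y)))))) * (y) := by simp only [mul_assoc, one_mul, mul_one]
      _ = (x*(x*(x*(x*(y*(y*(x*(y*(x*(y*(y*(x*(y*(x*(x*(x)))))))))))))))) * (1) * (y) := by rw [rxy]
      _ = (x*(x*(x*(x*(y))))) * (1) * (y*(x*(y*(x*(y*(y*(x*(y*(x*(x*(x*(y)))))))))))) := by simp only [mul_assoc, one_mul, mul_one]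
      _ = (x*(x*(x*(x*(y))))) * (x*(x*(x*(x*(x))))) * (y*(x*(y*(x*(y*(y*(x*(y*(x*(x*(x*(y)))))))))))) := by rw [rx]
      _ = (x*(x*(x*(x*(y*(x*(x*(x*(x))))))))) * (x*(y*(x*(y*(x*(y)))))) * (y*(x*(y*(x*(x*(x*(y))))))) := by simp only [mul_assoc, one_mul, mul_one]
      _ = (x*(x*(x*(x*(y*(x*(x*(x*(x))))))))) * (1) * (y*(x*(y*(x*(x*(x*(y))))))) := by rw [rxy]
      _ = (x*(x*(x*(x*(y*(x*(x*(x*(x*(y*(x*(y*(x))))))))))))) * (1) * (x*(x*(y))) := by simp only [mul_assoc, one_mul, mul_one]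
      _ = (x*(x*(x*(x*(y*(x*(x*(x*(x*(y*(x*(y*(x))))))))))))) * (y*(y)) * (x*(x*(y))) := by rw [ry]
      _ = (x*(x*(x*(x*(y*(x*(x*(x)))))))) * (x*(y*(x*(y*(x*(y)))))) * (y*(x*(x*(y)))) := by simp only [mul_assoc, one_mul, mul_one]
      _ = (x*(x*(x*(x*(y*(x*(x*(x)))))))) * (1) * (y*(x*(x*(y)))) := by rw [rxy]
      _ = x ^ (4:ℕ) * (y*(x*(x*(x*(y*(x*(x*(y)))))))) := by simp only [pow_succ, pow_zero, one_mul, mul_one, mul_assoc]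

include rx ry rxy in
set_option maxHeartbeats 1000000 in
theorem cw_table_y : ∀ (j : Fin 12), ∃ (a : ℕ) (m : Fin 12), cw x y j * y = x ^ a * cw x y m := by
  intro j; fin_cases j
  · refine ⟨0, 1, ?_⟩
    show (1) * y = x ^ (0:ℕ) * (y)
    group
  · refine ⟨0, 0, ?_⟩
    show (y) * y = x ^ (0:ℕ) * (1)
    calc (y) * y = (1) * (y*(y)) * (1) := by simp only [mul_assoc, one_mul, mul_one]
      _ = (1) * (1) * (1) := by rw [ry]
      _ = x ^ (0:ℕ) * (1) := by simp only [pow_succ, pow_zero, one_mul, mul_one, mul_assoc]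
  · refine ⟨0, 4, ?_⟩
    show (y*(x)) * y = x ^ (0:ℕ) * (y*(x*(y)))
    group
  · refine ⟨0, 6, ?_⟩
    show (y*(x*(x))) * y = x ^ (0:ℕ) * (y*(x*(x*(y))))
    group
  · refine ⟨0, 2, ?_⟩
    show (y*(x*(y))) * y = x ^ (0:ℕ) * (y*(x))
    calc (y*(x*(y))) * y = (y*(x)) * (y*(y)) * (1) := by simp only [mul_assoc, one_mul, mul_one]
      _ = (y*(x)) * (1) * (1) := by rw [ry]
      _ = x ^ (0:ℕ) * (y*(x)) := by simp only [pow_succ, pow_zero, one_mul, mul_one, mul_assoc]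
  · refine ⟨0, 7, ?_⟩
    show (y*(x*(x*(x)))) * y = x ^ (0:ℕ) * (y*(x*(x*(x*(y)))))
    group
  · refine ⟨0, 3, ?_⟩
    show (y*(x*(x*(y)))) * y = x ^ (0:ℕ) * (y*(x*(x)))
    calc (y*(x*(x*(y)))) * y = (y*(x*(x))) * (y*(y)) * (1) := by simp only [mul_assoc, one_mul, mul_one]
      _ = (y*(x*(x))) * (1) * (1) := by rw [ry]
      _ = x ^ (0:ℕ) * (y*(x*(x))) := by simp only [pow_succ, pow_zero, one_mul, mul_one, mul_assoc]
  · refine ⟨0, 5, ?_⟩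
    show (y*(x*(x*(x*(y))))) * y = x ^ (0:ℕ) * (y*(x*(x*(x))))
    calc (y*(x*(x*(x*(y))))) * y = (y*(x*(x*(x)))) * (y*(y)) * (1) := by simp only [mul_assoc, one_mul, mul_one]
      _ = (y*(x*(x*(x)))) * (1) * (1) := by rw [ry]
      _ = x ^ (0:ℕ) * (y*(x*(x*(x)))) := by simp only [pow_succ, pow_zero, one_mul, mul_one, mul_assoc]
  · refine ⟨0, 10, ?_⟩
    show (y*(x*(x*(x*(y*(x)))))) * y = x ^ (0:ℕ) * (y*(x*(x*(x*(y*(x*(y)))))))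
    group
  · refine ⟨0, 11, ?_⟩
    show (y*(x*(x*(x*(y*(x*(x))))))) * y = x ^ (0:ℕ) * (y*(x*(x*(x*(y*(x*(x*(y))))))))
    group
  · refine ⟨0, 8, ?_⟩
    show (y*(x*(x*(x*(y*(x*(y))))))) * y = x ^ (0:ℕ) * (y*(x*(x*(x*(y*(x))))))
    calc (y*(x*(x*(x*(y*(x*(y))))))) * y = (y*(x*(x*(x*(y*(x)))))) * (y*(y)) * (1) := by simp only [mul_assoc, one_mul, mul_one]
      _ = (y*(x*(x*(x*(y*(x)))))) * (1) * (1) := by rw [ry]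
      _ = x ^ (0:ℕ) * (y*(x*(x*(x*(y*(x)))))) := by simp only [pow_succ, pow_zero, one_mul, mul_one, mul_assoc]
  · refine ⟨0, 9, ?_⟩
    show (y*(x*(x*(x*(y*(x*(x*(y)))))))) * y = x ^ (0:ℕ) * (y*(x*(x*(x*(y*(x*(x)))))))
    calc (y*(x*(x*(x*(y*(x*(x*(y)))))))) * y = (y*(x*(x*(x*(y*(x*(x))))))) * (y*(y)) * (1) := by simp only [mul_assoc, one_mul, mul_one]
      _ = (y*(x*(x*(x*(y*(x*(x))))))) * (1) * (1) := by rw [ry]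
      _ = x ^ (0:ℕ) * (y*(x*(x*(x*(y*(x*(x))))))) := by simp only [pow_succ, pow_zero, one_mul, mul_one, mul_assoc]
include rx ry rxy in
theorem covering :
    ∀ g ∈ Subgroup.closure ({x, y} : Set Γ),
      ∃ p : Fin 5 × Fin 12, g = x ^ (p.1 : ℕ) * cw x y p.2 := by
  classical
  have hx5 : x ^ 5 = 1 := by
    rw [← rx]; simp only [pow_succ, pow_zero, one_mul, mul_one, mul_assoc]
  have hxpow : ∀ n : ℕ, x ^ n = x ^ (n % 5) := by
    intro n
    conv_lhs => rw [← Nat.div_add_mod n 5]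
    rw [pow_add, pow_mul, hx5, one_pow, one_mul]
  set S : Set Γ := {g | ∃ p : Fin 5 × Fin 12, g = x ^ (p.1 : ℕ) * cw x y p.2} with hSdef
  have hfin : S.Finite := by
    apply Set.Finite.subset (Set.finite_range (fun p : Fin 5 × Fin 12 => x ^ (p.1 : ℕ) * cw x y p.2))
    rintro g ⟨p, hp⟩
    exact ⟨p, hp.symm⟩
  have key : ∀ g : Γ, (∀ j : Fin 12, ∃ (a : ℕ) (m : Fin 12), cw x y j * g = x ^ a * cw x y m) →
      ∀ t ∈ S, t * g ∈ S := by
    rintro g htab t ⟨⟨i, j⟩, rfl⟩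
    obtain ⟨a, m, h⟩ := htab j
    refine ⟨(⟨((i : ℕ) + a) % 5, Nat.mod_lt _ (by norm_num)⟩, m), ?_⟩
    calc (x ^ (i : ℕ) * cw x y j) * g = x ^ (i : ℕ) * (cw x y j * g) := by rw [mul_assoc]
      _ = x ^ (i : ℕ) * (x ^ a * cw x y m) := by rw [h]
      _ = x ^ ((i : ℕ) + a) * cw x y m := by rw [← mul_assoc, ← pow_add]
      _ = x ^ (((i : ℕ) + a) % 5) * cw x y m := by rw [hxpow ((i : ℕ) + a)]
  have h1S : (1 : Γ) ∈ S := ⟨(⟨0, by norm_num⟩, ⟨0, by norm_num⟩), by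
    show (1 : Γ) = x ^ (0 : ℕ) * (1 : Γ); rw [pow_zero, one_mul]⟩
  have main : ∀ g ∈ Subgroup.closure ({x, y} : Set Γ), ∀ t ∈ S, t * g ∈ S := by
    intro g hg
    induction hg using Subgroup.closure_induction with
    | mem z hz =>
      rcases hz with h | h
      · rw [h]; exact key x (cw_table_x x y rx ry rxy)
      · rw [h]; exact key y (cw_table_y x y rx ry rxy)
    | one => intro t ht; rwa [mul_one]
    | mul g1 g2 _ _ ih1 ih2 =>
      intro t ht
      rw [← mul_assoc]
      exact ih2 _ (ih1 t ht)
    | inv g1 _ ih =>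
      intro t ht
      have hmaps : Set.MapsTo (· * g1) S S := fun u hu => ih u hu
      have hinj : Set.InjOn (· * g1) S := fun u _ v _ h => mul_right_cancel h
      have hbij := (Set.Finite.injOn_iff_bijOn_of_mapsTo hfin hmaps).mp hinj
      obtain ⟨u, hu, hu2⟩ := hbij.surjOn ht
      have : t * g1⁻¹ = u := by
        simp only at hu2
        rw [← hu2, mul_inv_cancel_right]
      rw [this]; exact hu
  intro g hg
  have := main g hg 1 h1S
  rwa [one_mul] at this

end words



/-- The relators of the standard presentation of `A₅`. -/
def relsA5 : Set (FreeGroup Bool) :=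
  {(FreeGroup.of true) ^ 5, (FreeGroup.of false) ^ 2,
    ((FreeGroup.of true) * (FreeGroup.of false)) ^ 3}

theorem relsA5_hold {H : Type*} [Group H] (Cg Ag : H) (h5 : Cg ^ 5 = 1) (h2 : Ag ^ 2 = 1)
    (h3 : (Cg * Ag) ^ 3 = 1) :
    ∀ r ∈ relsA5, FreeGroup.lift (fun b => cond b Cg Ag) r = 1 := by
  rintro r (rfl | rfl | rfl) <;>
    simp only [map_pow, map_mul, FreeGroup.lift_apply_of, cond_true, cond_false, h5, h2, h3]

theorem presented_relations :
    ((PresentedGroup.of true : PresentedGroup relsA5) ^ 5 = 1 ∧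
      (PresentedGroup.of false : PresentedGroup relsA5) ^ 2 = 1) ∧
      ((PresentedGroup.of true : PresentedGroup relsA5) *
        (PresentedGroup.of false : PresentedGroup relsA5)) ^ 3 = 1 := by
  refine ⟨⟨?_, ?_⟩, ?_⟩
  · rw [show (PresentedGroup.of true : PresentedGroup relsA5) ^ 5
        = PresentedGroup.mk relsA5 ((FreeGroup.of true) ^ 5) by rw [map_pow]; rfl]
    rw [show (1 : PresentedGroup relsA5) = PresentedGroup.mk relsA5 1 by rfl]
    exact (QuotientGroup.eq_one_iff _).mpr
      (Subgroup.subset_normalClosure (Set.mem_insert _ _))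
  · rw [show (PresentedGroup.of false : PresentedGroup relsA5) ^ 2
        = PresentedGroup.mk relsA5 ((FreeGroup.of false) ^ 2) by rw [map_pow]; rfl]
    exact (QuotientGroup.eq_one_iff _).mpr
      (Subgroup.subset_normalClosure (Set.mem_insert_of_mem _ (Set.mem_insert _ _)))
  · rw [show ((PresentedGroup.of true : PresentedGroup relsA5) *
        (PresentedGroup.of false : PresentedGroup relsA5)) ^ 3
        = PresentedGroup.mk relsA5 (((FreeGroup.of true) * (FreeGroup.of false)) ^ 3) by
          rw [map_pow, map_mul]; rfl]
    exact (QuotientGroup.eq_one_iff _).mpr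
      (Subgroup.subset_normalClosure
        (Set.mem_insert_of_mem _ (Set.mem_insert_of_mem _ rfl)))

/-- The presented group is covered by 60 words. -/
theorem presented_cover :
    ∃ f : Fin 5 × Fin 12 → PresentedGroup relsA5, Function.Surjective f := by
  obtain ⟨⟨hx5, hy2⟩, hxy3⟩ := presented_relations
  set x : PresentedGroup relsA5 := PresentedGroup.of true
  set y : PresentedGroup relsA5 := PresentedGroup.of false
  have rx : x * (x * (x * (x * x))) = 1 := by
    rw [← hx5]; simp only [pow_succ, pow_zero, one_mul, mul_one, mul_assoc]
  have ry : y * y = 1 := by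
    rw [← hy2]; simp only [pow_succ, pow_zero, one_mul, mul_one, mul_assoc]
  have rxy : x * (y * (x * (y * (x * y)))) = 1 := by
    rw [← hxy3]; simp only [pow_succ, pow_zero, one_mul, mul_one, mul_assoc]
  have hcl : Subgroup.closure ({x, y} : Set (PresentedGroup relsA5)) = ⊤ := by
    rw [← PresentedGroup.closure_range_of relsA5]
    congr 1
    ext z
    constructor
    · rintro (rfl | rfl)
      · exact ⟨true, rfl⟩
      · exact ⟨false, rfl⟩
    · rintro ⟨b, rfl⟩
      cases b
      · exact Set.mem_insert_of_mem _ rfl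
      · exact Set.mem_insert _ _
  have hcov : ∀ g : PresentedGroup relsA5,
      ∃ p : Fin 5 × Fin 12, g = x ^ (p.1 : ℕ) * cw x y p.2 := by
    intro g
    exact covering x y rx ry rxy g (by rw [hcl]; trivial)
  refine ⟨fun p : Fin 5 × Fin 12 => x ^ (p.1 : ℕ) * cw x y p.2, ?_⟩
  intro g
  obtain ⟨p, hp⟩ := hcov g
  exact ⟨p, hp.symm⟩

instance presented_finite : Finite (PresentedGroup relsA5) := by
  obtain ⟨f, hf⟩ := presented_cover
  exact Finite.of_surjective f hf

theorem card_presented_le : Nat.card (PresentedGroup relsA5) ≤ 60 := by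
  obtain ⟨f, hf⟩ := presented_cover
  calc Nat.card (PresentedGroup relsA5) ≤ Nat.card (Fin 5 × Fin 12) :=
        Nat.card_le_card_of_surjective _ hf
    _ = 60 := by simp


namespace ClosureIsoA5Aux

/-- `(1 2 3 4 5)` as an element of the alternating group. -/
def X : ↥(alternatingGroup (Fin 5)) :=
  ⟨finRotate 5, Equiv.Perm.mem_alternatingGroup.mpr (by decide)⟩

/-- `(1 2)(3 4)` as an element of the alternating group. -/
def Y : ↥(alternatingGroup (Fin 5)) :=
  ⟨Equiv.swap 0 1 * Equiv.swap 2 3, Equiv.Perm.mem_alternatingGroup.mpr (by decide)⟩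

theorem X_pow_five : X ^ 5 = 1 := by
  apply Subtype.ext
  show ((X : Equiv.Perm (Fin 5)) ^ 5 : Equiv.Perm (Fin 5)) = 1
  decide

theorem Y_pow_two : Y ^ 2 = 1 := by
  apply Subtype.ext
  show ((Y : Equiv.Perm (Fin 5)) ^ 2 : Equiv.Perm (Fin 5)) = 1
  decide

theorem XY_pow_three : (X * Y) ^ 3 = 1 := by
  apply Subtype.ext
  show (((X : Equiv.Perm (Fin 5)) * Y) ^ 3 : Equiv.Perm (Fin 5)) = 1
  decide

theorem card_alt : Nat.card ↥(alternatingGroup (Fin 5)) = 60 := by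
  rw [Nat.card_eq_fintype_card]
  have h2 := two_mul_card_alternatingGroup (α := Fin 5)
  have h120 : Fintype.card (Equiv.Perm (Fin 5)) = 120 := by
    rw [Fintype.card_perm, Fintype.card_fin]
    rfl
  rw [h120] at h2
  omega

theorem closure_XY : Subgroup.closure ({X, Y} : Set ↥(alternatingGroup (Fin 5))) = ⊤ := by
  haveI : Fact (Nat.Prime 5) := ⟨by norm_num⟩
  haveI : Fact (Nat.Prime 2) := ⟨by norm_num⟩
  haveI : Fact (Nat.Prime 3) := ⟨by norm_num⟩
  set M : Subgroup ↥(alternatingGroup (Fin 5)) := Subgroup.closure {X, Y} with hM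
  have hXM : X ∈ M := Subgroup.subset_closure (Set.mem_insert _ _)
  have hYM : Y ∈ M := Subgroup.subset_closure (Set.mem_insert_of_mem _ rfl)
  have hXYM : X * Y ∈ M := mul_mem hXM hYM
  have hoX : orderOf X = 5 := by
    rw [← Subgroup.orderOf_coe]
    exact orderOf_eq_prime (by decide) (by decide)
  have hoY : orderOf Y = 2 := by
    rw [← Subgroup.orderOf_coe]
    exact orderOf_eq_prime (by decide) (by decide)
  have hoXY : orderOf (X * Y) = 3 := by
    rw [← Subgroup.orderOf_coe]
    exact orderOf_eq_prime (by decide) (by decide)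
  have h5 : (5 : ℕ) ∣ Nat.card M := by
    have := M.orderOf_dvd_natCard hXM; rwa [hoX] at this
  have h2 : (2 : ℕ) ∣ Nat.card M := by
    have := M.orderOf_dvd_natCard hYM; rwa [hoY] at this
  have h3 : (3 : ℕ) ∣ Nat.card M := by
    have := M.orderOf_dvd_natCard hXYM; rwa [hoXY] at this
  have h30 : (30 : ℕ) ∣ Nat.card M := by
    have h6 : (6 : ℕ) ∣ Nat.card M :=
      (by decide : Nat.Coprime 2 3).mul_dvd_of_dvd_of_dvd h2 h3
    exact (by decide : Nat.Coprime 6 5).mul_dvd_of_dvd_of_dvd h6 h5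
  have hdvd : Nat.card M ∣ 60 := by rw [← card_alt]; exact M.card_subgroup_dvd_card
  have hMcard : Nat.card M = 30 ∨ Nat.card M = 60 := by
    obtain ⟨j, hj⟩ := h30
    have hle : Nat.card M ≤ 60 := Nat.le_of_dvd (by norm_num) hdvd
    have hpos : Nat.card M ≠ 0 := by
      intro h0
      rw [h0] at hdvd
      exact absurd (Nat.eq_zero_of_zero_dvd hdvd) (by norm_num)
    omega
  have hidx := M.card_mul_index
  rw [card_alt] at hidx
  rcases hMcard with h | h
  · -- index 2, hence normal, contradiction with simplicity
    rw [h] at hidx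
    have hindex : M.index = 2 := by omega
    have hnormal : M.Normal := by
      constructor
      intro n hn g
      have h1 : g * n * g⁻¹ ∈ M ↔ ((g * n ∈ M) ↔ (g⁻¹ ∈ M)) :=
        Subgroup.mul_mem_iff_of_index_two hindex
      have h2' : g * n ∈ M ↔ ((g ∈ M) ↔ (n ∈ M)) := Subgroup.mul_mem_iff_of_index_two hindex
      rw [h1, h2', inv_mem_iff]
      simp [hn]
    rcases hnormal.eq_bot_or_eq_top with hb | ht
    · rw [hb, Subgroup.card_bot] at h; omega
    · exact ht
  · rw [h] at hidx
    have : M.index = 1 := by omega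
    exact Subgroup.index_eq_one.mp this


/-- The canonical homomorphism from the presented group to the alternating group. -/
def phi : PresentedGroup relsA5 →* ↥(alternatingGroup (Fin 5)) :=
  PresentedGroup.toGroup (relsA5_hold X Y X_pow_five Y_pow_two XY_pow_three)

theorem phi_of_true : phi (PresentedGroup.of true) = X := PresentedGroup.toGroup.of _
theorem phi_of_false : phi (PresentedGroup.of false) = Y := PresentedGroup.toGroup.of _

theorem phi_surjective : Function.Surjective phi := by
  rw [← MonoidHom.range_eq_top, MonoidHom.range_eq_map,
    ← PresentedGroup.closure_range_of relsA5, MonoidHom.map_closure, ← closure_XY]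
  congr 1
  ext z
  constructor
  · rintro ⟨w, ⟨b, rfl⟩, rfl⟩
    cases b
    · rw [phi_of_false]; exact Set.mem_insert_of_mem _ rfl
    · rw [phi_of_true]; exact Set.mem_insert _ _
  · rintro (rfl | rfl)
    · exact ⟨PresentedGroup.of true, ⟨true, rfl⟩, phi_of_true⟩
    · exact ⟨PresentedGroup.of false, ⟨false, rfl⟩, phi_of_false⟩

theorem phi_bijective : Function.Bijective phi := by
  have hsurj := phi_surjective
  have hle := card_presented_le
  have hge : (60 : ℕ) ≤ Nat.card (PresentedGroup relsA5) := by
    have h := Nat.card_le_card_of_surjective phi hsurj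
    rw [card_alt] at h
    exact h
  haveI : Fintype (PresentedGroup relsA5) := Fintype.ofFinite _
  rw [Fintype.bijective_iff_surjective_and_card]
  refine ⟨hsurj, ?_⟩
  rw [← Nat.card_eq_fintype_card, ← Nat.card_eq_fintype_card, card_alt]
  omega

end ClosureIsoA5Aux

/-- Over L = K(√r), with √5 ∈ L and −1 = (a+b√r)² + (c+d√r)², the
matrices A = [[0,1],[−1,0]] and
C = [[2c+2d√r+√5−3, 2a+2b√r−√5+1],[2a+2b√r+√5−1, −2c−2d√r+√5−3]] generate a subgroup
of PGL₂(L) isomorphic to A₅, with A ↦ (1 2)(3 4) and C ↦ (1 2 3 4 5). -/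
theorem closure_iso_A5 (K : Type*) [Field K] [CharZero K]
    (L : Type*) [Field L] [Algebra K L]
    (r : K) (hr : ¬ ∃ x : K, x ^ 2 = r)
    (ρ : L) (hρ : ρ ^ 2 = algebraMap K L r)
    (hL : Algebra.adjoin K ({ρ} : Set L) = ⊤)
    (s : L) (hs : s ^ 2 = 5)
    (a b c d : K)
    (habcd : (algebraMap K L a + algebraMap K L b * ρ) ^ 2 +
      (algebraMap K L c + algebraMap K L d * ρ) ^ 2 = -1)
    (A C : GL (Fin 2) L)
    (hA : (A : Matrix (Fin 2) (Fin 2) L) = !![0, 1; -1, 0])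
    (hC : (C : Matrix (Fin 2) (Fin 2) L) =
      !![2 * algebraMap K L c + 2 * algebraMap K L d * ρ + s - 3,
         2 * algebraMap K L a + 2 * algebraMap K L b * ρ - s + 1;
         2 * algebraMap K L a + 2 * algebraMap K L b * ρ + s - 1,
         -(2 * algebraMap K L c) - 2 * algebraMap K L d * ρ + s - 3]) :
    ∃ e : ↥(Subgroup.closure {(QuotientGroup.mk A : PGL2 L), QuotientGroup.mk C}) ≃*
        ↥(alternatingGroup (Fin 5)),
      ((e ⟨QuotientGroup.mk A, Subgroup.subset_closure (Set.mem_insert _ _)⟩ :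
          Equiv.Perm (Fin 5)) = Equiv.swap 0 1 * Equiv.swap 2 3) ∧
      ((e ⟨QuotientGroup.mk C,
            Subgroup.subset_closure (Set.mem_insert_of_mem _ rfl)⟩ :
          Equiv.Perm (Fin 5)) = finRotate 5) := by
  classical
  haveI : CharZero L := charZero_of_injective_algebraMap (algebraMap K L).injective
  -- notation
  set U : L := 2 * algebraMap K L c + 2 * algebraMap K L d * ρ with hU
  set V : L := 2 * algebraMap K L a + 2 * algebraMap K L b * ρ with hV
  clear_value U V
  have hUV : U ^ 2 + V ^ 2 = -4 := by rw [hU, hV]; linear_combination 4 * habcd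
  set M : Matrix (Fin 2) (Fin 2) L := !![U + s - 3, V - s + 1; V + s - 1, -U + s - 3] with hMdef
  clear_value M
  have hCM : (C : Matrix (Fin 2) (Fin 2) L) = M := by
    rw [hC, hMdef, hU, hV, ← Matrix.ext_iff]
    simp only [Fin.forall_fin_two, Matrix.of_apply, Matrix.cons_val', Matrix.cons_val_zero,
      Matrix.cons_val_one, Matrix.head_cons, Matrix.head_fin_const, Matrix.empty_val',
      Matrix.cons_val_fin_one, Matrix.smul_apply, Matrix.add_apply, smul_eq_mul]
    and_intros <;> first | trivial | ring1
  -- Cayley-Hamilton style computations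
  have hM2 : M * M = (2 * s - 6) • M + (8 * s - 24) • 1 := by
    rw [hMdef, Matrix.mul_fin_two, Matrix.one_fin_two, ← Matrix.ext_iff]
    simp only [Fin.forall_fin_two, Matrix.of_apply, Matrix.cons_val', Matrix.cons_val_zero,
      Matrix.cons_val_one, Matrix.head_cons, Matrix.head_fin_const, Matrix.empty_val',
      Matrix.cons_val_fin_one, Matrix.smul_apply, Matrix.add_apply, smul_eq_mul]
    and_intros <;>
      first
        | trivial
        | ring1
        | linear_combination hUV - 2 * hs
  have hM2' : M ^ 2 = (2 * s - 6) • M + (8 * s - 24) • 1 := by rw [sq]; exact hM2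
  have hM3 : M ^ 3 = (32 - 16 * s) • M + (224 - 96 * s) • 1 := by
    rw [pow_succ, hM2', add_mul, smul_mul_assoc, smul_mul_assoc, one_mul, hM2]
    match_scalars
    · linear_combination 4 * hs
    · linear_combination 16 * hs
  have hM5 : M ^ 5 = (5632 - 2560 * s) • 1 := by
    rw [show (5 : ℕ) = 3 + 2 from rfl, pow_add, hM3, hM2']
    simp only [add_mul, mul_add, smul_mul_assoc, mul_smul_comm, smul_smul, one_mul, mul_one]
    rw [hM2]
    match_scalars
    · linear_combination (-64 * s + 192) * hs
    · linear_combination (-256 * s + 1280) * hs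
  -- the product C * A
  have hN2 : (M * !![0, 1; -1, 0]) * (M * !![0, 1; -1, 0])
      = (2 * s - 2) • (M * !![0, 1; -1, 0]) + (8 * s - 24) • 1 := by
    rw [hMdef]
    simp only [Matrix.mul_fin_two, Matrix.one_fin_two]
    rw [← Matrix.ext_iff]
    simp only [Fin.forall_fin_two, Matrix.of_apply, Matrix.cons_val', Matrix.cons_val_zero,
      Matrix.cons_val_one, Matrix.head_cons, Matrix.head_fin_const, Matrix.empty_val',
      Matrix.cons_val_fin_one, Matrix.smul_apply, Matrix.add_apply, smul_eq_mul]
    and_intros <;>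
      first
        | trivial
        | ring1
        | linear_combination hUV - 2 * hs
        | linear_combination -hUV + 2 * hs
        | linear_combination hUV + 2 * hs
        | linear_combination -hUV - 2 * hs
  have hN3 : (M * !![0, 1; -1, 0]) ^ 3 = (128 - 64 * s) • 1 := by
    rw [pow_succ, sq, hN2, add_mul, smul_mul_assoc, smul_mul_assoc, one_mul, hN2]
    match_scalars
    · linear_combination 4 * hs
    · linear_combination 16 * hs
  -- scalar matrices are central in GL₂
  have hcenter : ∀ (g : GL (Fin 2) L) (t : L), (g : Matrix (Fin 2) (Fin 2) L) = t • 1 →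
      g ∈ Subgroup.center (GL (Fin 2) L) := by
    intro g t hg
    rw [Subgroup.mem_center_iff]
    intro w
    apply Units.ext
    show (w : Matrix (Fin 2) (Fin 2) L) * g = (g : Matrix (Fin 2) (Fin 2) L) * w
    rw [hg, mul_smul_comm, smul_mul_assoc, mul_one, one_mul]
  -- the three relations in PGL₂
  have hA2 : (QuotientGroup.mk A : PGL2 L) ^ 2 = 1 := by
    rw [← QuotientGroup.mk_pow, QuotientGroup.eq_one_iff]
    apply hcenter _ (-1)
    rw [Units.val_pow_eq_pow_val, hA, sq, Matrix.mul_fin_two, Matrix.one_fin_two,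
      ← Matrix.ext_iff]
    simp only [Fin.forall_fin_two, Matrix.of_apply, Matrix.cons_val', Matrix.cons_val_zero,
      Matrix.cons_val_one, Matrix.head_cons, Matrix.head_fin_const, Matrix.empty_val',
      Matrix.cons_val_fin_one, Matrix.smul_apply, Matrix.add_apply, smul_eq_mul]
    and_intros <;> first | trivial | norm_num
  have hC5 : (QuotientGroup.mk C : PGL2 L) ^ 5 = 1 := by
    rw [← QuotientGroup.mk_pow, QuotientGroup.eq_one_iff]
    apply hcenter _ (5632 - 2560 * s)
    rw [Units.val_pow_eq_pow_val, hCM]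
    exact hM5
  have hCA3 : ((QuotientGroup.mk C : PGL2 L) * QuotientGroup.mk A) ^ 3 = 1 := by
    rw [← QuotientGroup.mk_mul, ← QuotientGroup.mk_pow, QuotientGroup.eq_one_iff]
    apply hcenter _ (128 - 64 * s)
    rw [Units.val_pow_eq_pow_val, Units.val_mul, hCM, hA]
    exact hN3
  -- [A] is not trivial in PGL₂
  have hAne : (QuotientGroup.mk A : PGL2 L) ≠ 1 := by
    intro h
    have hmem : A ∈ Subgroup.center (GL (Fin 2) L) := (QuotientGroup.eq_one_iff A).mp h
    have hcomm := Subgroup.mem_center_iff.mp hmem C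
    have hval := congrArg Units.val hcomm
    simp only [Units.val_mul] at hval
    rw [hCM, hA, hMdef] at hval
    simp only [Matrix.mul_fin_two] at hval
    rw [← Matrix.ext_iff] at hval
    simp only [Fin.forall_fin_two, Matrix.of_apply, Matrix.cons_val', Matrix.cons_val_zero,
      Matrix.cons_val_one, Matrix.head_cons, Matrix.head_fin_const, Matrix.empty_val',
      Matrix.cons_val_fin_one, Matrix.smul_apply, Matrix.add_apply, smul_eq_mul] at hval
    obtain ⟨⟨h00, h01⟩, -⟩ := hval
    have hV0 : V = 0 := by linear_combination (-1/2 : L) * h00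
    have hU0 : U = 0 := by linear_combination (1/2 : L) * h01
    have h40 : (4 : L) = 0 := by linear_combination hUV - U * hU0 - V * hV0
    norm_num at h40
  -- the homomorphism from the presented group to PGL₂
  set ψ : PresentedGroup relsA5 →* PGL2 L :=
    PresentedGroup.toGroup
      (relsA5_hold (QuotientGroup.mk C) (QuotientGroup.mk A) hC5 hA2 hCA3) with hψ
  have hψt : ψ (PresentedGroup.of true) = QuotientGroup.mk C := PresentedGroup.toGroup.of _
  have hψf : ψ (PresentedGroup.of false) = QuotientGroup.mk A := PresentedGroup.toGroup.of _
  set H : Subgroup (PGL2 L) :=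
    Subgroup.closure {(QuotientGroup.mk A : PGL2 L), QuotientGroup.mk C} with hH
  have hψrange : ψ.range = H := by
    rw [MonoidHom.range_eq_map, ← PresentedGroup.closure_range_of relsA5,
      MonoidHom.map_closure, hH]
    congr 1
    ext z
    constructor
    · rintro ⟨w, ⟨bb, rfl⟩, rfl⟩
      cases bb
      · rw [hψf]; exact Set.mem_insert _ _
      · rw [hψt]; exact Set.mem_insert_of_mem _ rfl
    · rintro (rfl | rfl)
      · exact ⟨_, ⟨false, rfl⟩, hψf⟩
      · exact ⟨_, ⟨true, rfl⟩, hψt⟩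
  -- the isomorphism with A₅
  set e0 : PresentedGroup relsA5 ≃* ↥(alternatingGroup (Fin 5)) :=
    MulEquiv.ofBijective ClosureIsoA5Aux.phi ClosureIsoA5Aux.phi_bijective with he0
  set χ : ↥(alternatingGroup (Fin 5)) →* PGL2 L := ψ.comp e0.symm.toMonoidHom with hχ
  have hχX : χ ClosureIsoA5Aux.X = QuotientGroup.mk C := by
    have h1 : e0.symm ClosureIsoA5Aux.X = PresentedGroup.of true := by
      rw [MulEquiv.symm_apply_eq]
      exact ClosureIsoA5Aux.phi_of_true.symm
    show ψ (e0.symm ClosureIsoA5Aux.X) = _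
    rw [h1, hψt]
  have hχY : χ ClosureIsoA5Aux.Y = QuotientGroup.mk A := by
    have h1 : e0.symm ClosureIsoA5Aux.Y = PresentedGroup.of false := by
      rw [MulEquiv.symm_apply_eq]
      exact ClosureIsoA5Aux.phi_of_false.symm
    show ψ (e0.symm ClosureIsoA5Aux.Y) = _
    rw [h1, hψf]
  have hχrange : χ.range = H := by
    rw [← hψrange]
    apply le_antisymm
    · rintro z ⟨g, rfl⟩
      exact ⟨e0.symm g, rfl⟩
    · rintro z ⟨g, rfl⟩
      exact ⟨e0 g, by show ψ (e0.symm (e0 g)) = ψ g; rw [MulEquiv.symm_apply_apply]⟩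
  have hχinj : Function.Injective χ := by
    rw [← MonoidHom.ker_eq_bot_iff]
    rcases (MonoidHom.normal_ker χ).eq_bot_or_eq_top with hb | ht
    · exact hb
    · exfalso
      apply hAne
      rw [← hχY]
      have : ClosureIsoA5Aux.Y ∈ χ.ker := by rw [ht]; trivial
      exact this
  have hmemH : ∀ g, χ g ∈ H := by
    intro g
    rw [← hχrange]
    exact ⟨g, rfl⟩
  set χ' : ↥(alternatingGroup (Fin 5)) →* ↥H := χ.codRestrict H hmemH with hχ'
  have hbij : Function.Bijective χ' := by
    constructor
    · intro u v huv
      apply hχinj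
      exact congrArg Subtype.val huv
    · rintro ⟨t, ht⟩
      have : t ∈ χ.range := by rw [hχrange]; exact ht
      obtain ⟨g, hg⟩ := this
      exact ⟨g, Subtype.ext hg⟩
  refine ⟨(MulEquiv.ofBijective χ' hbij).symm, ?_, ?_⟩
  · have key : ∀ pf : (QuotientGroup.mk A : PGL2 L) ∈ H,
        (((MulEquiv.ofBijective χ' hbij).symm ⟨QuotientGroup.mk A, pf⟩ :
          ↥(alternatingGroup (Fin 5))) : Equiv.Perm (Fin 5)) =
          Equiv.swap 0 1 * Equiv.swap 2 3 := by
      intro pf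
      rw [show (⟨QuotientGroup.mk A, pf⟩ : ↥H) = (MulEquiv.ofBijective χ' hbij) ClosureIsoA5Aux.Y from
        Subtype.ext hχY.symm, MulEquiv.symm_apply_apply]
      rfl
    exact key _
  · have key : ∀ pf : (QuotientGroup.mk C : PGL2 L) ∈ H,
        (((MulEquiv.ofBijective χ' hbij).symm ⟨QuotientGroup.mk C, pf⟩ :
          ↥(alternatingGroup (Fin 5))) : Equiv.Perm (Fin 5)) = finRotate 5 := by
      intro pf
      rw [show (⟨QuotientGroup.mk C, pf⟩ : ↥H) = (MulEquiv.ofBijective χ' hbij) ClosureIsoA5Aux.X from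
        Subtype.ext hχX.symm, MulEquiv.symm_apply_apply]
      rfl
    exact key _
end
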